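/- Let R be an associative unital ring, let a, b, c, d ∈ R, and suppose y is the (b,c)-inverse of a and z is the (b,c)-inverse of d. Then the following statements are equivalent: (i) y·a = d·z; (ii) y·d·z·a = d·z·a·y; (iii) z·d·y·a = d·y·a·z; (iv) y = d·z·y and z = z·y·a; (v) y·a·z = z·y·a and y·d·z = d·z·y. Moreover, if any of these statements holds, then z·y is the (b,c)-inverse of a·d. -/

import Mathlib

/-! Everything follows from two cross identities between (b,c)-inverses `y` of `a` and `z` of `d`
with the same `b` and `c`: `y a z = z` (as `z ∈ bR` and `y a b = b`) and `y d z = y`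
(as `y ∈ Rc` and `c d z = c`). Applied to the pairs `(y, z)`, `(z, y)`, `(y, y)` and `(z, z)`, they
reduce each of the five conditions to `y a = d z`. -/

def IsBCInverse {R : Type*} [Ring R] (a b c y : R) : Prop :=
  (∃ r, y = b * r * y) ∧ (∃ s, y = y * s * c) ∧ y * a * b = b ∧ c * a * y = c

namespace IsBCInverse

variable {R : Type*} [Ring R] {a b c d y z : R}

theorem mul_mul_eq_right (hy : IsBCInverse a b c y) (hz : IsBCInverse d b c z) :
    y * a * z = z := by
  obtain ⟨⟨r, hr⟩, -⟩ := hz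
  calc y * a * z = y * a * (b * r * z) := by rw [← hr]
    _ = y * a * b * (r * z) := by simp only [mul_assoc]
    _ = z := by rw [hy.2.2.1, ← mul_assoc, ← hr]

theorem mul_mul_eq_left (hy : IsBCInverse a b c y) (hz : IsBCInverse d b c z) :
    y * d * z = y := by
  obtain ⟨-, ⟨s, hs⟩, -⟩ := hy
  calc y * d * z = y * s * c * d * z := by rw [← hs]
    _ = y * s * (c * d * z) := by simp only [mul_assoc]
    _ = y := by rw [hz.2.2.2, ← hs]

theorem reverse_order (hy : IsBCInverse a b c y) (hz : IsBCInverse d b c z)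
    (h : y * a = d * z) : IsBCInverse (a * d) b c (z * y) := by
  have zdz := hz.mul_mul_eq_left hz
  obtain ⟨⟨r, hr⟩, -, hdb, -⟩ := hz
  obtain ⟨-, ⟨s, hs⟩, -, hcy⟩ := hy
  refine ⟨⟨r, by rw [← mul_assoc, ← hr]⟩, ⟨s, by rw [mul_assoc z y s, mul_assoc z, ← hs]⟩, ?_, ?_⟩
  · calc z * y * (a * d) * b = z * (y * a) * (d * b) := by simp only [mul_assoc]
      _ = z * d * z * (d * b) := by rw [h, mul_assoc z d z]
      _ = b := by rw [zdz, ← mul_assoc, hdb]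
  · calc c * (a * d) * (z * y) = c * a * (d * z) * y := by simp only [mul_assoc]
      _ = c * a * y * (a * y) := by rw [← h]; simp only [mul_assoc]
      _ = c := by rw [hcy, ← mul_assoc, hcy]

end IsBCInverse

/-- characterizations of `y·a = d·z` for the (b,c)-inverses `y` of `a`
and `z` of `d`; moreover any of them implies the reverse order rule
`(a·d)^{‖(b,c)} = z·y`. -/
theorem mixed_bc_idempotents_tfae {R : Type*} [Ring R] (a b c d y z : R)
    (hy : IsBCInverse a b c y) (hz : IsBCInverse d b c z) :
    List.TFAE
      [ y * a = d * z,
        y * d * z * a = d * z * a * y,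
        z * d * y * a = d * y * a * z,
        y = d * z * y ∧ z = z * y * a,
        y * a * z = z * y * a ∧ y * d * z = d * z * y ]
    ∧ (y * a = d * z → IsBCInverse (a * d) b c (z * y)) := by
  have yaz := hy.mul_mul_eq_right hz
  have ydz := hy.mul_mul_eq_left hz
  have zdy := hz.mul_mul_eq_right hy
  have zay := hz.mul_mul_eq_left hy
  refine ⟨?_, hy.reverse_order hz⟩
  tfae_have 1 ↔ 2 := by rw [ydz, mul_assoc (d * z), mul_assoc d, ← mul_assoc z, zay]
  tfae_have 1 ↔ 3 := by rw [zdy, mul_assoc (d * y), mul_assoc d, ← mul_assoc y, yaz]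
  tfae_have 1 → 4 := fun h =>
    ⟨by rw [← h, hy.mul_mul_eq_left hy], by rw [mul_assoc, h, ← mul_assoc, hz.mul_mul_eq_left hz]⟩
  tfae_have 4 → 5 := fun h => ⟨yaz.trans h.2, ydz.trans h.1⟩
  tfae_have 5 → 1 := fun ⟨hzya, hdzy⟩ => by
    rw [← ydz, hdzy, mul_assoc, mul_assoc, ← mul_assoc z, ← hzya, yaz]
  tfae_finish
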